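/- arXiv:1905.00278 — 2 statements merged into one kernel-verified Lean document; each statement's English description precedes it below -/
import Mathlib

section
/- The theory ACF of algebraically closed fields is model-complete: if K ⊆ L are algebraically closed fields, then K is an elementary substructure of L. -/
/-!
Let `p` be the characteristic of `K`, and let `T` be the theory, in the language of rings with a
constant for every element of `K`, consisting of `ACF p` and the addition and multiplication
tables of `K`. A model of `T` is an algebraically closed field of characteristic `p` with a ring
map from `K`. Two models of the same cardinality `κ > max |K| ℵ₀` have transcendence bases over
`K` of cardinality `κ`, hence are isomorphic over `K`. By the Łoś–Vaught test `T` is complete,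
and `K ⊆ L` are both models of `T`, so they satisfy the same formulas with parameters in `K`.
-/

open FirstOrder Language Ring Cardinal

universe u

namespace IsAlgClosed

variable {F M N : Type u} [Field F] [Field M] [Field N] [IsAlgClosed M] [IsAlgClosed N]
  [Algebra F M] [Algebra F N]

theorem cardinal_eq_cardinal_transcendence_basis_of_max_lt {s : Set M}
    (hs : IsTranscendenceBasis F ((↑) : s → M)) (h : max #F ℵ₀ < #M) : #M = #s := by
  refine le_antisymm (le_of_not_gt fun hlt => ?_) (mk_set_le s)
  exact (cardinal_le_max_transcendence_basis' _ hs).not_gt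
    (max_lt (max_lt ((le_max_left _ _).trans_lt h) hlt) ((le_max_right _ _).trans_lt h))

theorem nonempty_algEquiv_of_cardinal_eq (h : max #F ℵ₀ < #M) (hMN : #M = #N) :
    Nonempty (M ≃ₐ[F] N) := by
  obtain ⟨s, hs⟩ := exists_isTranscendenceBasis F M
  obtain ⟨t, ht⟩ := exists_isTranscendenceBasis F N
  obtain ⟨e⟩ : Nonempty (s ≃ t) := Cardinal.eq.1 <| by
    rw [← cardinal_eq_cardinal_transcendence_basis_of_max_lt hs h,
      ← cardinal_eq_cardinal_transcendence_basis_of_max_lt ht (hMN ▸ h), hMN]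
  let := isAlgClosure_of_transcendence_basis _ hs
  let := isAlgClosure_of_transcendence_basis _ ht
  let eAdjoin :=
    (hs.1.aevalEquiv.symm.trans (MvPolynomial.renameEquiv F e)).trans ht.1.aevalEquiv
  refine ⟨AlgEquiv.ofRingEquiv (f := IsAlgClosure.equivOfEquiv M N eAdjoin.toRingEquiv)
    fun a => ?_⟩
  rw [IsScalarTower.algebraMap_apply F (Algebra.adjoin F (Set.range ((↑) : s → M))) M,
    IsAlgClosure.equivOfEquiv_algebraMap, AlgEquiv.coe_ringEquiv, AlgEquiv.commutes,
    ← IsScalarTower.algebraMap_apply]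

end IsAlgClosed

namespace FirstOrder.Language

variable {L : Language} {α M N : Type*} [L.Structure M] [L.Structure N]
  [L[[α]].Structure M] [L[[α]].Structure N]
  [(L.lhomWithConstants α).IsExpansionOn M] [(L.lhomWithConstants α).IsExpansionOn N]

def Equiv.withConstants (f : M ≃[L] N) (hf : ∀ a : α, f (L.con a) = L.con a) :
    M ≃[L[[α]]] N where
  toEquiv := f.toEquiv
  map_fun' {n} g x := match n, g with
    | _, .inl g => by
      rw [withConstants_funMap_sumInl, withConstants_funMap_sumInl]
      exact f.map_fun g x
    | 0, .inr a => by
      rw [Subsingleton.elim (f.toFun ∘ x) default, Subsingleton.elim x default]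
      exact hf a
    | _ + 1, .inr a => isEmptyElim a
  map_rel' := fun
    | .inl r => fun x => by
        rw [withConstants_relMap_sumInl, withConstants_relMap_sumInl]
        exact f.map_rel r x
    | .inr r => isEmptyElim r

end FirstOrder.Language

namespace FirstOrder.Field

open Term in
noncomputable def ringDiagram (K : Type*) [Ring K] : Language.ring[[K]].Theory :=
  Set.range (fun ab : K × K =>
      Formula.equivSentence (equal (var ab.1 + var ab.2) (var (ab.1 + ab.2)))) ∪
    Set.range (fun ab : K × K =>
      Formula.equivSentence (equal (var ab.1 * var ab.2) (var (ab.1 * ab.2)))) ∪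
    {Formula.equivSentence (equal (var (1 : K)) 1)}

theorem model_ringDiagram_iff {K M : Type*} [Ring K] [Ring M] [CompatibleRing M]
    [Language.ring[[K]].Structure M] [(Language.ring.lhomWithConstants K).IsExpansionOn M] :
    M ⊨ ringDiagram K ↔ ∃ f : K →+* M, ∀ a, f a = (Language.ring.con a : M) := by
  rw [ringDiagram, Theory.model_union_iff, Theory.model_union_iff, Theory.model_singleton_iff]
  simp only [Theory.model_iff, Set.forall_mem_range, Formula.realize_equivSentence,
    Formula.realize_equal, realize_add, realize_mul, realize_one, Term.realize_var, Prod.forall]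
  constructor
  · rintro ⟨⟨hadd, hmul⟩, hone⟩
    exact ⟨RingHom.mk' ⟨⟨_, hone⟩, fun a b => (hmul a b).symm⟩ fun a b => (hadd a b).symm,
      fun _ => rfl⟩
  · rintro ⟨f, hf⟩
    simp [← hf]

noncomputable def ACFOver (K : Type*) [Ring K] (p : ℕ) : Language.ring[[K]].Theory :=
  (Language.ring.lhomWithConstants K).onTheory (Theory.ACF p) ∪ ringDiagram K

theorem infinite_of_model_ACF (p : ℕ) (M : Type*) [Language.ring.Structure M]
    [(Theory.ACF p).Model M] : Infinite M := by
  let := fieldOfModelACF p M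
  have := modelField_of_modelACF p M
  let := compatibleRingOfModelField M
  have := isAlgClosed_of_model_ACF p M
  infer_instance

theorem model_ACF_of_model_ACFOver {K : Type*} [Ring K] {p : ℕ} {M : Type*}
    [Language.ring.Structure M] [Language.ring[[K]].Structure M]
    [(Language.ring.lhomWithConstants K).IsExpansionOn M]
    (h : M ⊨ ACFOver K p) : M ⊨ Theory.ACF p :=
  (LHom.onTheory_model _ _).1 (h.mono Set.subset_union_left)

theorem nonempty_equiv_of_model_ringDiagram {K M N : Type u} [Field K] [Field M] [Field N]
    [IsAlgClosed M] [IsAlgClosed N] [CompatibleRing M] [CompatibleRing N]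
    [Language.ring[[K]].Structure M] [(Language.ring.lhomWithConstants K).IsExpansionOn M]
    [Language.ring[[K]].Structure N] [(Language.ring.lhomWithConstants K).IsExpansionOn N]
    (hM : M ⊨ ringDiagram K) (hN : N ⊨ ringDiagram K) (hK : max #K ℵ₀ < #M) (hMN : #M = #N) :
    Nonempty (M ≃[Language.ring[[K]]] N) := by
  obtain ⟨fM, hfM⟩ := model_ringDiagram_iff.1 hM
  obtain ⟨fN, hfN⟩ := model_ringDiagram_iff.1 hN
  let := fM.toAlgebra
  let := fN.toAlgebra
  obtain ⟨e⟩ := IsAlgClosed.nonempty_algEquiv_of_cardinal_eq (F := K) hK hMN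
  refine ⟨(languageEquivEquivRingEquiv.symm e.toRingEquiv).withConstants fun a => ?_⟩
  rw [← hfM, ← hfN]
  exact e.commutes a

theorem ACFOver_categorical (K : Type u) [Field K] (p : ℕ) {κ : Cardinal.{u}}
    (hκ : max #K ℵ₀ < κ) : κ.Categorical (ACFOver K p) := by
  rintro ⟨M⟩ ⟨N⟩ hM hN
  let := (Language.ring.lhomWithConstants K).reduct M
  let := (Language.ring.lhomWithConstants K).reduct N
  have hMK : M ⊨ ACFOver K p := inferInstance
  have hNK : N ⊨ ACFOver K p := inferInstance
  have := model_ACF_of_model_ACFOver hMK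
  have := model_ACF_of_model_ACFOver hNK
  let := fieldOfModelACF p M
  have := modelField_of_modelACF p M
  let := compatibleRingOfModelField M
  have := isAlgClosed_of_model_ACF p M
  let := fieldOfModelACF p N
  have := modelField_of_modelACF p N
  let := compatibleRingOfModelField N
  have := isAlgClosed_of_model_ACF p N
  exact nonempty_equiv_of_model_ringDiagram (hMK.mono Set.subset_union_right)
    (hNK.mono Set.subset_union_right) (hM ▸ hκ) (hM.trans hN.symm)

theorem model_ACFOver_of_ringHom {K M : Type*} [Ring K] [Field M] [CompatibleRing M]
    [IsAlgClosed M] (p : ℕ) [CharP M p] (f : K →+* M) :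
    letI := constantsOn.structure f
    M ⊨ ACFOver K p := by
  let := constantsOn.structure f
  exact Theory.model_union_iff.2 ⟨(LHom.onTheory_model _ _).2 inferInstance,
    model_ringDiagram_iff.2 ⟨f, fun _ => rfl⟩⟩

theorem card_ring_withConstants_le (K : Type u) : Language.ring[[K]].card ≤ max #K ℵ₀ := by
  rw [card_withConstants, card_ring, lift_uzero, lift_ofNat]
  exact add_le_of_le (le_max_right _ _) (ofNat_le_aleph0.trans (le_max_right _ _))
    (le_max_left _ _)

theorem ACFOver_isComplete (K : Type u) [Field K] (p : ℕ) [CharP K p] :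
    (ACFOver K p).IsComplete := by
  refine Categorical.isComplete.{u, 0, u} (Order.succ (max #K ℵ₀)) _
    (ACFOver_categorical K p (Order.lt_succ _)) ((le_max_right _ _).trans (Order.le_succ _))
    ?_ ?_ ?_
  · simpa only [lift_id] using (card_ring_withConstants_le K).trans (Order.le_succ _)
  · let := compatibleRingOfRing (AlgebraicClosure K)
    have : CharP (AlgebraicClosure K) p :=
      charP_of_injective_algebraMap (algebraMap K (AlgebraicClosure K)).injective p
    let := constantsOn.structure (algebraMap K (AlgebraicClosure K))
    exact ⟨(model_ACFOver_of_ringHom p (algebraMap K (AlgebraicClosure K))).bundled⟩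
  · rintro ⟨M⟩
    let := (Language.ring.lhomWithConstants K).reduct M
    have := model_ACF_of_model_ACFOver (K := K) (p := p) (M := M) inferInstance
    exact infinite_of_model_ACF p M

end FirstOrder.Field

/-- ACF is model-complete: if `K ⊆ L` are algebraically closed fields, then `K` is an
elementary substructure of `L` in the language of rings. -/
theorem ACF_model_complete {L : Type u} [Field L] [IsAlgClosed L] [CompatibleRing L]
    (K : Subfield L) [IsAlgClosed K] {n : ℕ}
    (φ : Language.ring.Formula (Fin n)) (v : Fin n → K) :
    letI := compatibleRingOfRing K
    (φ.Realize v ↔ φ.Realize (fun i => (v i : L))) := by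
  let := compatibleRingOfRing K
  have := ringChar.charP K
  have : CharP L (ringChar K) := charP_of_injective_ringHom K.subtype.injective (ringChar K)
  let := constantsOn.structure K.subtype
  have hK : K ⊨ Field.ACFOver K (ringChar K) := Field.model_ACFOver_of_ringHom _ (RingHom.id K)
  have hL : L ⊨ Field.ACFOver K (ringChar K) := Field.model_ACFOver_of_ringHom _ K.subtype
  have hcomplete := Field.ACFOver_isComplete K (ringChar K)
  have := (hcomplete.realize_sentence_iff (Formula.equivSentence (φ.relabel v)) K).trans
    (hcomplete.realize_sentence_iff _ L).symm
  rwa [Formula.realize_equivSentence, Formula.realize_equivSentence, Formula.realize_relabel,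
    Formula.realize_relabel] at this
end

section
/- (Weak Nullstellensatz) Let F be an algebraically closed field and I a proper ideal of F[x₁,...,xₙ]. Then V(I) ≠ ∅, i.e., there exists ā ∈ Fⁿ such that f(ā) = 0 for all f ∈ I. -/
namespace MvPolynomial

theorem zeroLocus_nonempty_of_ne_top {k K σ : Type*} [Field k] [Field K] [Algebra k K]
    [IsAlgClosed K] [Finite σ] {I : Ideal (MvPolynomial σ k)} (hI : I ≠ ⊤) :
    (zeroLocus K I).Nonempty := by
  obtain ⟨M, hM, hIM⟩ := I.exists_le_maximal hI
  obtain ⟨x, rfl⟩ := eq_vanishingIdeal_singleton_of_isMaximal K hM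
  exact ⟨x, fun p hp => (mem_vanishingIdeal_singleton_iff x p).1 (hIM hp)⟩

end MvPolynomial

/-- Hilbert's weak Nullstellensatz: a proper ideal of the polynomial ring over an
algebraically closed field has a common zero. -/
theorem weak_nullstellensatz {F : Type*} [Field F] [IsAlgClosed F] {n : ℕ}
    (I : Ideal (MvPolynomial (Fin n) F)) (hI : I ≠ ⊤) :
    ∃ a : Fin n → F, ∀ f ∈ I, MvPolynomial.eval a f = 0 := by
  obtain ⟨a, ha⟩ := MvPolynomial.zeroLocus_nonempty_of_ne_top (K := F) hI
  exact ⟨a, fun f hf => by simpa [MvPolynomial.coe_aeval_eq_eval] using ha f hf⟩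
end
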